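/- arXiv:2508.17122 — 4 statements merged into one kernel-verified Lean document; each statement's English description precedes it below -/
import Mathlib

section
/- Let κ,ε>0 and λ≥0. Let f,v,z : [0,1]×[0,1] → ℝ be smooth functions (in (x,t)) satisfying ε v_xxxx − λ v_xx + κ v + z f_x = 0 on (0,1)², v = 0 and v_xx = 0 at x ∈ {0,1}, and ∂_t z + ∂_x(z v) = 0. Let f₁,v₁,z₁ : [0,1]×[0,1] → ℝ be smooth functions satisfying z₁ = ∂_t f₁ + v ∂_x f₁ + v₁ ∂_x f, with v₁ = 0 at x ∈ {0,1}, f₁(x,1) = 0 and f₁(x,0) = θ(x) for all x. Then ∫₀¹∫₀¹ (κ v v₁ + λ v_x (v₁)_x + ε v_xx (v₁)_xx + z z₁) dx dt = −∫₀¹ z(x,0) θ(x) dx. -/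
open MeasureTheory Set intervalIntegral
open scoped ContDiff

private lemma hv_sliceX {g : ℝ → ℝ → ℝ}
    (hg : ContDiff ℝ (⊤ : ℕ∞) (fun p : ℝ × ℝ => g p.1 p.2)) (t : ℝ) :
    ContDiff ℝ ∞ (fun y => g y t) :=
  ((hg.comp (contDiff_id.prodMk contDiff_const)) : ContDiff ℝ (⊤ : ℕ∞) _).of_le (by simp)

private lemma hv_sliceT {g : ℝ → ℝ → ℝ}
    (hg : ContDiff ℝ (⊤ : ℕ∞) (fun p : ℝ × ℝ => g p.1 p.2)) (x : ℝ) :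
    ContDiff ℝ ∞ (fun s => g x s) :=
  ((hg.comp (contDiff_const.prodMk contDiff_id)) : ContDiff ℝ (⊤ : ℕ∞) _).of_le (by simp)

private lemma hv_contDiff_deriv {g : ℝ → ℝ} (h : ContDiff ℝ ∞ g) :
    ContDiff ℝ ∞ (deriv g) := (contDiff_infty_iff_deriv.mp h).2

private lemma hv_contDiff_iteratedDeriv {g : ℝ → ℝ} (h : ContDiff ℝ ∞ g) (n : ℕ) :
    ContDiff ℝ ∞ (iteratedDeriv n g) := by
  rw [iteratedDeriv_eq_iterate]; exact h.iterate_deriv n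

private lemma hv_diff {g : ℝ → ℝ} (h : ContDiff ℝ ∞ g) : Differentiable ℝ g :=
  h.differentiable (by simp)

private lemma hv_hasDerivAt_iteratedDeriv {g : ℝ → ℝ} (h : ContDiff ℝ ∞ g) (n : ℕ) (x : ℝ) :
    HasDerivAt (iteratedDeriv n g) (iteratedDeriv (n + 1) g x) x := by
  rw [iteratedDeriv_succ]
  exact (hv_diff (hv_contDiff_iteratedDeriv h n) x).hasDerivAt

private lemma hv_hasDerivAt_slice_t {g : ℝ → ℝ → ℝ}
    (hg : ContDiff ℝ (⊤ : ℕ∞) (fun p : ℝ × ℝ => g p.1 p.2)) (x t : ℝ) :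
    HasDerivAt (fun s => g x s)
      (fderiv ℝ (fun p : ℝ × ℝ => g p.1 p.2) (x, t) (0, 1)) t := by
  have h1 : HasDerivAt (fun s : ℝ => ((x, s) : ℝ × ℝ)) ((0:ℝ), (1:ℝ)) t :=
    (hasDerivAt_const t x).prodMk (hasDerivAt_id t)
  have h2 := ((hg.differentiable (by simp) (x, t)).hasFDerivAt).comp_hasDerivAt t h1
  exact h2

private lemma hv_contDiff_fderiv_apply {g : ℝ × ℝ → ℝ} (hg : ContDiff ℝ (⊤ : ℕ∞) g) (w : ℝ × ℝ) :
    Continuous (fun p => fderiv ℝ g p w) :=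
  (((hg.fderiv_right (m := ∞) (by simp))).clm_apply contDiff_const).continuous


/-- The integration-by-parts identity underlying the first variation
of the squared HV metric. Here functions `f v z f₁ v₁ z₁ : ℝ → ℝ → ℝ` take the spatial
variable `x` as the first argument and the artificial time `t` as the second;
subscripts `x`/`t` become `deriv`/`iteratedDeriv` in the corresponding variable. -/
theorem hv_first_variation_ibp
    (κ lam ε : ℝ) (hκ : 0 < κ) (hε : 0 < ε) (hlam : 0 ≤ lam)
    (f v z f₁ v₁ z₁ : ℝ → ℝ → ℝ) (θ : ℝ → ℝ)
    (hf : ContDiff ℝ (⊤ : ℕ∞) (fun p : ℝ × ℝ => f p.1 p.2))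
    (hv : ContDiff ℝ (⊤ : ℕ∞) (fun p : ℝ × ℝ => v p.1 p.2))
    (hz : ContDiff ℝ (⊤ : ℕ∞) (fun p : ℝ × ℝ => z p.1 p.2))
    (hf₁ : ContDiff ℝ (⊤ : ℕ∞) (fun p : ℝ × ℝ => f₁ p.1 p.2))
    (hv₁ : ContDiff ℝ (⊤ : ℕ∞) (fun p : ℝ × ℝ => v₁ p.1 p.2))
    (hz₁ : ContDiff ℝ (⊤ : ℕ∞) (fun p : ℝ × ℝ => z₁ p.1 p.2))
    -- ε v_xxxx − λ v_xx + κ v + z f_x = 0 on (0,1)²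
    (hEL1 : ∀ x ∈ Ioo (0:ℝ) 1, ∀ t ∈ Ioo (0:ℝ) 1,
      ε * iteratedDeriv 4 (fun y => v y t) x - lam * iteratedDeriv 2 (fun y => v y t) x
        + κ * v x t + z x t * deriv (fun y => f y t) x = 0)
    -- v = 0 and v_xx = 0 at x ∈ {0,1}
    (hvbc : ∀ t ∈ Icc (0:ℝ) 1, v 0 t = 0 ∧ v 1 t = 0 ∧
      iteratedDeriv 2 (fun y => v y t) 0 = 0 ∧ iteratedDeriv 2 (fun y => v y t) 1 = 0)
    -- ∂_t z + ∂_x (z v) = 0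
    (hzconsv : ∀ x ∈ Ioo (0:ℝ) 1, ∀ t ∈ Ioo (0:ℝ) 1,
      deriv (fun s => z x s) t + deriv (fun y => z y t * v y t) x = 0)
    -- z₁ = ∂_t f₁ + v ∂_x f₁ + v₁ ∂_x f
    (hz₁def : ∀ x ∈ Icc (0:ℝ) 1, ∀ t ∈ Icc (0:ℝ) 1,
      z₁ x t = deriv (fun s => f₁ x s) t + v x t * deriv (fun y => f₁ y t) x
        + v₁ x t * deriv (fun y => f y t) x)
    -- v₁ = 0 at x ∈ {0,1}
    (hv₁bc : ∀ t ∈ Icc (0:ℝ) 1, v₁ 0 t = 0 ∧ v₁ 1 t = 0)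
    -- f₁(x,1) = 0 and f₁(x,0) = θ(x) for all x
    (hf₁bc : ∀ x ∈ Icc (0:ℝ) 1, f₁ x 1 = 0 ∧ f₁ x 0 = θ x) :
    (∫ t in (0:ℝ)..1, ∫ x in (0:ℝ)..1,
        (κ * v x t * v₁ x t
          + lam * deriv (fun y => v y t) x * deriv (fun y => v₁ y t) x
          + ε * iteratedDeriv 2 (fun y => v y t) x * iteratedDeriv 2 (fun y => v₁ y t) x
          + z x t * z₁ x t))
      = -∫ x in (0:ℝ)..1, z x 0 * θ x := by
  have h01 : (0:ℝ) ≤ 1 := zero_le_one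
  have hZF : ContDiff ℝ (⊤ : ℕ∞) (fun p : ℝ × ℝ => z p.1 p.2 * f₁ p.1 p.2) := hz.mul hf₁
  set P : ℝ → ℝ → ℝ :=
    fun x t => fderiv ℝ (fun p : ℝ × ℝ => z p.1 p.2 * f₁ p.1 p.2) (x, t) (0, 1) with hPdef
  have hPderiv : ∀ x t : ℝ, deriv (fun s => z x s * f₁ x s) t = P x t := fun x t =>
    (hv_hasDerivAt_slice_t (g := fun x t => z x t * f₁ x t) hZF x t).deriv
  have hPc : Continuous (fun p : ℝ × ℝ => P p.1 p.2) := by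
    have := hv_contDiff_fderiv_apply hZF (0, 1)
    exact this
  -- ### Step 1: for fixed t ∈ (0,1), the inner integral equals ∫ P x t dx.
  have key : ∀ t ∈ Ioo (0:ℝ) 1,
      (∫ x in (0:ℝ)..1,
        (κ * v x t * v₁ x t
          + lam * deriv (fun y => v y t) x * deriv (fun y => v₁ y t) x
          + ε * iteratedDeriv 2 (fun y => v y t) x * iteratedDeriv 2 (fun y => v₁ y t) x
          + z x t * z₁ x t))
      = ∫ x in (0:ℝ)..1, P x t := by
    intro t ht
    have ht' : t ∈ Icc (0:ℝ) 1 := Ioo_subset_Icc_self ht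
    have hV : ContDiff ℝ ∞ (fun y => v y t) := hv_sliceX hv t
    have hV1 : ContDiff ℝ ∞ (fun y => v₁ y t) := hv_sliceX hv₁ t
    have hZs : ContDiff ℝ ∞ (fun y => z y t) := hv_sliceX hz t
    have hZ1s : ContDiff ℝ ∞ (fun y => z₁ y t) := hv_sliceX hz₁ t
    have hF1s : ContDiff ℝ ∞ (fun y => f₁ y t) := hv_sliceX hf₁ t
    have hbc := hvbc t ht'
    have hbc1 := hv₁bc t ht'
    -- integration by parts, first order term
    have ibp1 : (∫ x in (0:ℝ)..1, deriv (fun y => v y t) x * deriv (fun y => v₁ y t) x)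
        = - ∫ x in (0:ℝ)..1, iteratedDeriv 2 (fun y => v y t) x * v₁ x t := by
      have h := integral_mul_deriv_eq_deriv_mul (a := (0:ℝ)) (b := 1)
        (u := deriv (fun y => v y t)) (v := fun x => v₁ x t)
        (u' := iteratedDeriv 2 (fun y => v y t)) (v' := deriv (fun y => v₁ y t))
        (fun x _ => by simpa [iteratedDeriv_one] using hv_hasDerivAt_iteratedDeriv hV 1 x)
        (fun x _ => (hv_diff hV1 x).hasDerivAt)
        (((hv_contDiff_iteratedDeriv hV 2).continuous).intervalIntegrable _ _)
        (((hv_contDiff_deriv hV1).continuous).intervalIntegrable _ _)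
      rw [h]; simp [hbc1.1, hbc1.2]
    -- integration by parts, second order term (twice)
    have ibp2a : (∫ x in (0:ℝ)..1,
          iteratedDeriv 2 (fun y => v y t) x * iteratedDeriv 2 (fun y => v₁ y t) x)
        = - ∫ x in (0:ℝ)..1, iteratedDeriv 3 (fun y => v y t) x * deriv (fun y => v₁ y t) x := by
      have h := integral_mul_deriv_eq_deriv_mul (a := (0:ℝ)) (b := 1)
        (u := iteratedDeriv 2 (fun y => v y t)) (v := deriv (fun y => v₁ y t))
        (u' := iteratedDeriv 3 (fun y => v y t)) (v' := iteratedDeriv 2 (fun y => v₁ y t))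
        (fun x _ => hv_hasDerivAt_iteratedDeriv hV 2 x)
        (fun x _ => by simpa [iteratedDeriv_one] using hv_hasDerivAt_iteratedDeriv hV1 1 x)
        (((hv_contDiff_iteratedDeriv hV 3).continuous).intervalIntegrable _ _)
        (((hv_contDiff_iteratedDeriv hV1 2).continuous).intervalIntegrable _ _)
      rw [h]; simp [hbc.2.2.1, hbc.2.2.2]
    have ibp2b : (∫ x in (0:ℝ)..1,
          iteratedDeriv 3 (fun y => v y t) x * deriv (fun y => v₁ y t) x)
        = - ∫ x in (0:ℝ)..1, iteratedDeriv 4 (fun y => v y t) x * v₁ x t := by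
      have h := integral_mul_deriv_eq_deriv_mul (a := (0:ℝ)) (b := 1)
        (u := iteratedDeriv 3 (fun y => v y t)) (v := fun x => v₁ x t)
        (u' := iteratedDeriv 4 (fun y => v y t)) (v' := deriv (fun y => v₁ y t))
        (fun x _ => hv_hasDerivAt_iteratedDeriv hV 3 x)
        (fun x _ => (hv_diff hV1 x).hasDerivAt)
        (((hv_contDiff_iteratedDeriv hV 4).continuous).intervalIntegrable _ _)
        (((hv_contDiff_deriv hV1).continuous).intervalIntegrable _ _)
      rw [h]; simp [hbc1.1, hbc1.2]
    -- integrability of the four summands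
    have iA : IntervalIntegrable (fun x => κ * v x t * v₁ x t) volume 0 1 :=
      (((continuous_const.mul hV.continuous).mul hV1.continuous)).intervalIntegrable _ _
    have iB : IntervalIntegrable
        (fun x => lam * deriv (fun y => v y t) x * deriv (fun y => v₁ y t) x) volume 0 1 :=
      (((continuous_const.mul (hv_contDiff_deriv hV).continuous).mul
        (hv_contDiff_deriv hV1).continuous)).intervalIntegrable _ _
    have iC : IntervalIntegrable
        (fun x => ε * iteratedDeriv 2 (fun y => v y t) x * iteratedDeriv 2 (fun y => v₁ y t) x)
        volume 0 1 :=
      (((continuous_const.mul (hv_contDiff_iteratedDeriv hV 2).continuous).mul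
        (hv_contDiff_iteratedDeriv hV1 2).continuous)).intervalIntegrable _ _
    have iD : IntervalIntegrable (fun x => z x t * z₁ x t) volume 0 1 :=
      ((hZs.continuous.mul hZ1s.continuous)).intervalIntegrable _ _
    -- split the integral
    have hsplit : (∫ x in (0:ℝ)..1,
        (κ * v x t * v₁ x t
          + lam * deriv (fun y => v y t) x * deriv (fun y => v₁ y t) x
          + ε * iteratedDeriv 2 (fun y => v y t) x * iteratedDeriv 2 (fun y => v₁ y t) x
          + z x t * z₁ x t))
        = (∫ x in (0:ℝ)..1, κ * v x t * v₁ x t)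
          + (∫ x in (0:ℝ)..1, lam * deriv (fun y => v y t) x * deriv (fun y => v₁ y t) x)
          + (∫ x in (0:ℝ)..1,
              ε * iteratedDeriv 2 (fun y => v y t) x * iteratedDeriv 2 (fun y => v₁ y t) x)
          + (∫ x in (0:ℝ)..1, z x t * z₁ x t) := by
      rw [integral_add ((iA.add iB).add iC) iD, integral_add (iA.add iB) iC, integral_add iA iB]
    -- pull out constants and apply IBP
    have eB : (∫ x in (0:ℝ)..1, lam * deriv (fun y => v y t) x * deriv (fun y => v₁ y t) x)
        = lam * (- ∫ x in (0:ℝ)..1, iteratedDeriv 2 (fun y => v y t) x * v₁ x t) := by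
      rw [← ibp1, ← intervalIntegral.integral_const_mul]
      congr 1; funext x; ring
    have eC : (∫ x in (0:ℝ)..1,
          ε * iteratedDeriv 2 (fun y => v y t) x * iteratedDeriv 2 (fun y => v₁ y t) x)
        = ε * (∫ x in (0:ℝ)..1, iteratedDeriv 4 (fun y => v y t) x * v₁ x t) := by
      have : (∫ x in (0:ℝ)..1,
          iteratedDeriv 2 (fun y => v y t) x * iteratedDeriv 2 (fun y => v₁ y t) x)
          = ∫ x in (0:ℝ)..1, iteratedDeriv 4 (fun y => v y t) x * v₁ x t := by
        rw [ibp2a, ibp2b]; ring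
      rw [← this, ← intervalIntegral.integral_const_mul]
      congr 1; funext x; ring
    -- reassemble into one integral
    have iA2 : IntervalIntegrable
        (fun x => - (lam * (iteratedDeriv 2 (fun y => v y t) x * v₁ x t))) volume 0 1 :=
      (((continuous_const.mul ((hv_contDiff_iteratedDeriv hV 2).continuous.mul
        hV1.continuous))).neg).intervalIntegrable _ _
    have iA3 : IntervalIntegrable
        (fun x => ε * (iteratedDeriv 4 (fun y => v y t) x * v₁ x t)) volume 0 1 :=
      ((continuous_const.mul ((hv_contDiff_iteratedDeriv hV 4).continuous.mul
        hV1.continuous))).intervalIntegrable _ _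
    have hjoin : (∫ x in (0:ℝ)..1,
        (κ * v x t * v₁ x t
          + (- (lam * (iteratedDeriv 2 (fun y => v y t) x * v₁ x t)))
          + ε * (iteratedDeriv 4 (fun y => v y t) x * v₁ x t)
          + z x t * z₁ x t))
        = (∫ x in (0:ℝ)..1, κ * v x t * v₁ x t)
          + lam * (- ∫ x in (0:ℝ)..1, iteratedDeriv 2 (fun y => v y t) x * v₁ x t)
          + ε * (∫ x in (0:ℝ)..1, iteratedDeriv 4 (fun y => v y t) x * v₁ x t)
          + (∫ x in (0:ℝ)..1, z x t * z₁ x t) := by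
      rw [integral_add ((iA.add iA2).add iA3) iD, integral_add (iA.add iA2) iA3,
        integral_add iA iA2, intervalIntegral.integral_neg, intervalIntegral.integral_const_mul, intervalIntegral.integral_const_mul]
      ring
    -- use the Euler–Lagrange equation and the definition of z₁
    have step2 : (∫ x in (0:ℝ)..1,
        (κ * v x t * v₁ x t
          + (- (lam * (iteratedDeriv 2 (fun y => v y t) x * v₁ x t)))
          + ε * (iteratedDeriv 4 (fun y => v y t) x * v₁ x t)
          + z x t * z₁ x t))
        = ∫ x in (0:ℝ)..1,
            (z x t * deriv (fun s => f₁ x s) t + z x t * v x t * deriv (fun y => f₁ y t) x) := by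
      apply intervalIntegral.integral_congr_ae
      have hne1 : ∀ᵐ x : ℝ, x ≠ (1:ℝ) := by
        rw [ae_iff]
        simpa [not_not, Set.setOf_eq_eq_singleton] using measure_singleton (1:ℝ)
      filter_upwards [hne1] with x hx1 hxmem
      rw [uIoc_of_le h01] at hxmem
      have hxI : x ∈ Ioo (0:ℝ) 1 := ⟨hxmem.1, lt_of_le_of_ne hxmem.2 hx1⟩
      have hxI' : x ∈ Icc (0:ℝ) 1 := Ioo_subset_Icc_self hxI
      rw [hz₁def x hxI' t ht']
      linear_combination (v₁ x t) * hEL1 x hxI t ht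
    -- conservation law: replace by a total derivative
    have step3 : (∫ x in (0:ℝ)..1,
          (z x t * deriv (fun s => f₁ x s) t + z x t * v x t * deriv (fun y => f₁ y t) x))
        = ∫ x in (0:ℝ)..1, P x t := by
      have hQ : ContDiff ℝ ∞ (fun y => z y t * v y t * f₁ y t) := (hZs.mul hV).mul hF1s
      have hQd : ∀ x : ℝ, HasDerivAt (fun y => z y t * v y t * f₁ y t)
          (deriv (fun y => z y t * v y t) x * f₁ x t
            + z x t * v x t * deriv (fun y => f₁ y t) x) x := fun x =>
        ((hv_diff (hZs.mul hV) x).hasDerivAt).mul (hv_diff hF1s x).hasDerivAt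
      have hPd : ∀ x : ℝ, P x t = deriv (fun s => z x s) t * f₁ x t
          + z x t * deriv (fun s => f₁ x s) t := by
        intro x
        rw [← hPderiv]
        exact (((hv_diff (hv_sliceT hz x) t).hasDerivAt).mul
          ((hv_diff (hv_sliceT hf₁ x) t).hasDerivAt)).deriv
      have hPcx : Continuous (fun x => P x t) :=
        hPc.comp (continuous_id.prodMk continuous_const)
      have hQdc : Continuous (deriv (fun y => z y t * v y t * f₁ y t)) :=
        (hv_contDiff_deriv hQ).continuous
      have e1 : (∫ x in (0:ℝ)..1,
            (z x t * deriv (fun s => f₁ x s) t + z x t * v x t * deriv (fun y => f₁ y t) x))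
          = ∫ x in (0:ℝ)..1, (P x t + deriv (fun y => z y t * v y t * f₁ y t) x) := by
        apply intervalIntegral.integral_congr_ae
        have hne1 : ∀ᵐ x : ℝ, x ≠ (1:ℝ) := by
          rw [ae_iff]
          simpa [not_not, Set.setOf_eq_eq_singleton] using measure_singleton (1:ℝ)
        filter_upwards [hne1] with x hx1 hxmem
        rw [uIoc_of_le h01] at hxmem
        have hxI : x ∈ Ioo (0:ℝ) 1 := ⟨hxmem.1, lt_of_le_of_ne hxmem.2 hx1⟩
        rw [(hQd x).deriv, hPd x]
        linear_combination (-(f₁ x t)) * hzconsv x hxI t ht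
      rw [e1, integral_add (hPcx.intervalIntegrable _ _) (hQdc.intervalIntegrable _ _)]
      have e2 : (∫ x in (0:ℝ)..1, deriv (fun y => z y t * v y t * f₁ y t) x)
          = z 1 t * v 1 t * f₁ 1 t - z 0 t * v 0 t * f₁ 0 t :=
        integral_deriv_eq_sub (fun x _ => hv_diff hQ x) (hQdc.intervalIntegrable _ _)
      rw [e2, hbc.1, hbc.2.1]
      ring
    rw [hsplit, eB, eC, ← hjoin, step2, step3]
  -- ### Step 2: outer integral, Fubini and FTC in t.
  have hne1 : ∀ᵐ t : ℝ, t ≠ (1:ℝ) := by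
    rw [ae_iff]
    simpa [not_not, Set.setOf_eq_eq_singleton] using measure_singleton (1:ℝ)
  have outer : (∫ t in (0:ℝ)..1, ∫ x in (0:ℝ)..1,
        (κ * v x t * v₁ x t
          + lam * deriv (fun y => v y t) x * deriv (fun y => v₁ y t) x
          + ε * iteratedDeriv 2 (fun y => v y t) x * iteratedDeriv 2 (fun y => v₁ y t) x
          + z x t * z₁ x t))
      = ∫ t in (0:ℝ)..1, ∫ x in (0:ℝ)..1, P x t := by
    apply intervalIntegral.integral_congr_ae
    filter_upwards [hne1] with t ht1 htmem
    rw [uIoc_of_le h01] at htmem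
    exact key t ⟨htmem.1, lt_of_le_of_ne htmem.2 ht1⟩
  rw [outer]
  rw [intervalIntegral.integral_of_le h01]
  simp only [intervalIntegral.integral_of_le h01]
  have hInt : Integrable (Function.uncurry (fun t x => P x t))
      ((volume.restrict (Ioc (0:ℝ) 1)).prod (volume.restrict (Ioc (0:ℝ) 1))) := by
    rw [Measure.prod_restrict, ← Measure.volume_eq_prod]
    exact (((hPc.comp continuous_swap).continuousOn).integrableOn_compact
      (isCompact_Icc.prod isCompact_Icc)).mono_set
      (prod_mono Ioc_subset_Icc_self Ioc_subset_Icc_self)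
  rw [MeasureTheory.integral_integral_swap hInt]
  have inner : ∀ x ∈ Ioc (0:ℝ) 1,
      (∫ t in Ioc (0:ℝ) 1, P x t) = -(z x 0 * θ x) := by
    intro x hx
    have hx' : x ∈ Icc (0:ℝ) 1 := Ioc_subset_Icc_self hx
    rw [← intervalIntegral.integral_of_le h01]
    have hzf : ContDiff ℝ ∞ (fun s => z x s * f₁ x s) := (hv_sliceT hz x).mul (hv_sliceT hf₁ x)
    have e : (∫ t in (0:ℝ)..1, P x t) = ∫ t in (0:ℝ)..1, deriv (fun s => z x s * f₁ x s) t := by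
      apply integral_congr
      intro t _
      exact (hPderiv x t).symm
    rw [e, integral_deriv_eq_sub (fun s _ => hv_diff hzf s)
      ((hv_contDiff_deriv hzf).continuous.intervalIntegrable _ _),
      (hf₁bc x hx').1, (hf₁bc x hx').2]
    ring
  rw [setIntegral_congr_fun measurableSet_Ioc inner, MeasureTheory.integral_neg,
    ← intervalIntegral.integral_of_le h01]
end

section
/- Let κ,ε>0 and λ≥0. Let f,v,z : [0,1]×[0,1] → ℝ be smooth functions satisfying ε v_xxxx − λ v_xx + κ v + z f_x = 0 on (0,1)², v = 0 and v_xx = 0 at x ∈ {0,1}, and ∂_t z + ∂_x(z v) = 0. Let f₁,v₁,z₁ be smooth functions satisfying the linearized system: z₁ = ∂_t f₁ + v ∂_x f₁ + v₁ ∂_x f, ∂_t z₁ + ∂_x(z v₁ + z₁ v) = 0, ε (v₁)_xxxx − λ (v₁)_xx + κ v₁ + z (f₁)_x + z₁ f_x = 0 on (0,1)², with v₁ = 0 and (v₁)_xx = 0 at x ∈ {0,1}, f₁(x,0) = θ(x) and f₁(x,1) = 0 for all x. Then ∫₀¹∫₀¹ (κ v₁² + λ ((v₁)_x)² + ε ((v₁)_xx)²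 + z₁² + 2 z (f₁)_x v₁) dx dt = −∫₀¹ z₁(x,0) θ(x) dx. -/
open MeasureTheory Set intervalIntegral

section helpers
variable {F : ℝ → ℝ → ℝ}

lemma slice_x (hF : ContDiff ℝ (⊤ : ℕ∞) (fun p : ℝ × ℝ => F p.1 p.2)) (t : ℝ) :
    ContDiff ℝ (⊤ : ℕ∞) (fun y => F y t) :=
  hF.comp (contDiff_id.prodMk contDiff_const)

lemma slice_t (hF : ContDiff ℝ (⊤ : ℕ∞) (fun p : ℝ × ℝ => F p.1 p.2)) (x : ℝ) :
    ContDiff ℝ (⊤ : ℕ∞) (fun s => F x s) :=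
  hF.comp (contDiff_const.prodMk contDiff_id)

lemma Dx_contDiff (hF : ContDiff ℝ (⊤ : ℕ∞) (fun p : ℝ × ℝ => F p.1 p.2)) :
    ContDiff ℝ (⊤ : ℕ∞) (fun p : ℝ × ℝ => deriv (fun y => F y p.2) p.1) := by
  have h : ContDiff ℝ (⊤ : ℕ∞) (fun p : ℝ × ℝ =>
      fderiv ℝ (fun y => F y p.2) p.1 (1:ℝ)) := by
    have hf : ContDiff ℝ (⊤ : ℕ∞) (Function.uncurry (fun (p : ℝ × ℝ) (y : ℝ) => F y p.2)) := by
      exact hF.comp ((contDiff_snd).prodMk (contDiff_snd.comp contDiff_fst))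
    exact (ContDiff.fderiv hf contDiff_fst (by simp)).clm_apply contDiff_const
  simpa only [fderiv_apply_one_eq_deriv] using h
end helpers
section helpers2
variable {F : ℝ → ℝ → ℝ}

lemma Dt_contDiff (hF : ContDiff ℝ (⊤ : ℕ∞) (fun p : ℝ × ℝ => F p.1 p.2)) :
    ContDiff ℝ (⊤ : ℕ∞) (fun p : ℝ × ℝ => deriv (fun s => F p.1 s) p.2) := by
  have h : ContDiff ℝ (⊤ : ℕ∞) (fun p : ℝ × ℝ =>
      fderiv ℝ (fun s => F p.1 s) p.2 (1:ℝ)) := by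
    have hf : ContDiff ℝ (⊤ : ℕ∞) (Function.uncurry (fun (p : ℝ × ℝ) (s : ℝ) => F p.1 s)) :=
      hF.comp ((contDiff_fst.comp contDiff_fst).prodMk contDiff_snd)
    exact (ContDiff.fderiv hf contDiff_snd (by simp)).clm_apply contDiff_const
  simpa only [fderiv_apply_one_eq_deriv] using h

lemma Dxn_contDiff (hF : ContDiff ℝ (⊤ : ℕ∞) (fun p : ℝ × ℝ => F p.1 p.2)) (n : ℕ) :
    ContDiff ℝ (⊤ : ℕ∞) (fun p : ℝ × ℝ => iteratedDeriv n (fun y => F y p.2) p.1) := by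
  induction n with
  | zero => simpa using hF
  | succ n ih =>
    have h := Dx_contDiff (F := fun x t => iteratedDeriv n (fun y => F y t) x) ih
    simpa only [iteratedDeriv_succ] using h
end helpers2
section helpers3

lemma extend_zero {G : ℝ × ℝ → ℝ} (hG : Continuous G)
    (h : ∀ x ∈ Ioo (0:ℝ) 1, ∀ t ∈ Ioo (0:ℝ) 1, G (x, t) = 0) :
    ∀ x ∈ Icc (0:ℝ) 1, ∀ t ∈ Icc (0:ℝ) 1, G (x, t) = 0 := by
  have heq : EqOn G (fun _ => 0) (Ioo (0:ℝ) 1 ×ˢ Ioo (0:ℝ) 1) :=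
    fun p hp => h p.1 hp.1 p.2 hp.2
  have hcl := heq.closure hG continuous_const
  intro x hx t ht
  apply hcl
  rw [closure_prod_eq, closure_Ioo (by norm_num : (0:ℝ) ≠ 1)]
  exact ⟨hx, ht⟩

lemma contDiff_deriv_inf {g : ℝ → ℝ} (hg : ContDiff ℝ ((⊤:ℕ∞)) g) :
    ContDiff ℝ ((⊤:ℕ∞)) (deriv g) :=
  (contDiff_infty_iff_deriv.mp hg).2

lemma ibp_step {u w : ℝ → ℝ} (hu : ContDiff ℝ ((⊤:ℕ∞)) u) (hw : ContDiff ℝ ((⊤:ℕ∞)) w) :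
    ∫ x in (0:ℝ)..1, deriv u x * w x
      = u 1 * w 1 - u 0 * w 0 - ∫ x in (0:ℝ)..1, u x * deriv w x := by
  have hdu : Continuous (deriv u) := (contDiff_deriv_inf hu).continuous
  have hdw : Continuous (deriv w) := (contDiff_deriv_inf hw).continuous
  have h := intervalIntegral.integral_deriv_mul_eq_sub (a := (0:ℝ)) (b := 1)
    (u := u) (v := w) (u' := deriv u) (v' := deriv w)
    (fun x _ => (hu.differentiable (by simp) x).hasDerivAt)
    (fun x _ => (hw.differentiable (by simp) x).hasDerivAt)
    (hdu.intervalIntegrable 0 1) (hdw.intervalIntegrable 0 1)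
  have hsplit : ∫ x in (0:ℝ)..1, (deriv u x * w x + u x * deriv w x)
      = (∫ x in (0:ℝ)..1, deriv u x * w x) + ∫ x in (0:ℝ)..1, u x * deriv w x :=
    integral_add ((hdu.mul hw.continuous).intervalIntegrable _ _)
      ((hu.continuous.mul hdw).intervalIntegrable _ _)
  rw [hsplit] at h
  linarith

lemma ibp_two {g : ℝ → ℝ} (hg : ContDiff ℝ ((⊤:ℕ∞)) g) (h0 : g 0 = 0) (h1 : g 1 = 0) :
    ∫ x in (0:ℝ)..1, iteratedDeriv 2 g x * g x = -∫ x in (0:ℝ)..1, (deriv g x) ^ 2 := by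
  have h2 : iteratedDeriv 2 g = deriv (deriv g) := by
    rw [iteratedDeriv_succ, iteratedDeriv_one]
  rw [h2, ibp_step (contDiff_deriv_inf hg) hg, h0, h1]
  simp [sq]

lemma ibp_four {g : ℝ → ℝ} (hg : ContDiff ℝ ((⊤:ℕ∞)) g) (h0 : g 0 = 0) (h1 : g 1 = 0)
    (h20 : iteratedDeriv 2 g 0 = 0) (h21 : iteratedDeriv 2 g 1 = 0) :
    ∫ x in (0:ℝ)..1, iteratedDeriv 4 g x * g x
      = ∫ x in (0:ℝ)..1, (iteratedDeriv 2 g x) ^ 2 := by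
  have hg1 : ContDiff ℝ ((⊤:ℕ∞)) (deriv g) := contDiff_deriv_inf hg
  have hg2 : ContDiff ℝ ((⊤:ℕ∞)) (iteratedDeriv 2 g) := by
    rw [iteratedDeriv_succ, iteratedDeriv_one]; exact contDiff_deriv_inf hg1
  have h3 : iteratedDeriv 3 g = deriv (iteratedDeriv 2 g) := iteratedDeriv_succ
  have h4 : iteratedDeriv 4 g = deriv (iteratedDeriv 3 g) := iteratedDeriv_succ
  have hg3 : ContDiff ℝ ((⊤:ℕ∞)) (iteratedDeriv 3 g) := by rw [h3]; exact contDiff_deriv_inf hg2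
  have step1 : ∫ x in (0:ℝ)..1, iteratedDeriv 4 g x * g x
      = -∫ x in (0:ℝ)..1, iteratedDeriv 3 g x * deriv g x := by
    rw [h4, ibp_step hg3 hg, h0, h1]; ring
  have step2 : ∫ x in (0:ℝ)..1, iteratedDeriv 3 g x * deriv g x
      = -∫ x in (0:ℝ)..1, iteratedDeriv 2 g x * iteratedDeriv 2 g x := by
    rw [h3, ibp_step hg2 hg1, h20, h21]
    have heq : (fun x => iteratedDeriv 2 g x * deriv (deriv g) x)
        = fun x => iteratedDeriv 2 g x * iteratedDeriv 2 g x := by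
      funext x; rw [iteratedDeriv_succ, iteratedDeriv_one]
    rw [show (∫ x in (0:ℝ)..1, iteratedDeriv 2 g x * deriv (deriv g) x)
        = ∫ x in (0:ℝ)..1, iteratedDeriv 2 g x * iteratedDeriv 2 g x from by rw [heq]]
    ring
  rw [step1, step2]
  simp [sq]

end helpers3
section helpers4

lemma ftc01 {h : ℝ → ℝ} (hh : ContDiff ℝ ((⊤:ℕ∞)) h) :
    ∫ x in (0:ℝ)..1, deriv h x = h 1 - h 0 :=
  intervalIntegral.integral_deriv_eq_sub
    (fun x _ => (hh.differentiable (by simp) x))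
    ((contDiff_deriv_inf hh).continuous.intervalIntegrable 0 1)

lemma swap01 {G : ℝ → ℝ → ℝ} (hG : Continuous fun p : ℝ × ℝ => G p.1 p.2) :
    ∫ t in (0:ℝ)..1, ∫ x in (0:ℝ)..1, G x t = ∫ x in (0:ℝ)..1, ∫ t in (0:ℝ)..1, G x t := by
  simp only [intervalIntegral.integral_of_le (zero_le_one (α := ℝ))]
  have hint : Integrable (Function.uncurry fun (t x : ℝ) => G x t)
      ((volume.restrict (Ioc (0:ℝ) 1)).prod (volume.restrict (Ioc (0:ℝ) 1))) := by
    rw [Measure.prod_restrict]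
    have hc : Continuous (Function.uncurry fun (t x : ℝ) => G x t) := by
      exact hG.comp (continuous_snd.prodMk continuous_fst)
    have : IntegrableOn (Function.uncurry fun (t x : ℝ) => G x t)
        (Icc (0:ℝ) 1 ×ˢ Icc (0:ℝ) 1) ((volume : Measure ℝ).prod volume) :=
      hc.continuousOn.integrableOn_compact (isCompact_Icc.prod isCompact_Icc)
    exact this.mono_set (prod_mono Ioc_subset_Icc_self Ioc_subset_Icc_self)
  exact MeasureTheory.integral_integral_swap hint

end helpers4


/-- The integration-by-parts identity underlying the second variation
(Hessian) of the squared HV metric. Functions `f v z f₁ v₁ z₁ : ℝ → ℝ → ℝ` take the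
spatial variable `x` as the first argument and the artificial time `t` as the second. -/
theorem hv_second_variation_ibp
    (κ lam ε : ℝ) (hκ : 0 < κ) (hε : 0 < ε) (hlam : 0 ≤ lam)
    (f v z f₁ v₁ z₁ : ℝ → ℝ → ℝ) (θ : ℝ → ℝ)
    (hf : ContDiff ℝ (⊤ : ℕ∞) (fun p : ℝ × ℝ => f p.1 p.2))
    (hv : ContDiff ℝ (⊤ : ℕ∞) (fun p : ℝ × ℝ => v p.1 p.2))
    (hz : ContDiff ℝ (⊤ : ℕ∞) (fun p : ℝ × ℝ => z p.1 p.2))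
    (hf₁ : ContDiff ℝ (⊤ : ℕ∞) (fun p : ℝ × ℝ => f₁ p.1 p.2))
    (hv₁ : ContDiff ℝ (⊤ : ℕ∞) (fun p : ℝ × ℝ => v₁ p.1 p.2))
    (hz₁ : ContDiff ℝ (⊤ : ℕ∞) (fun p : ℝ × ℝ => z₁ p.1 p.2))
    -- ε v_xxxx − λ v_xx + κ v + z f_x = 0 on (0,1)²
    (hEL1 : ∀ x ∈ Ioo (0:ℝ) 1, ∀ t ∈ Ioo (0:ℝ) 1,
      ε * iteratedDeriv 4 (fun y => v y t) x - lam * iteratedDeriv 2 (fun y => v y t) x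
        + κ * v x t + z x t * deriv (fun y => f y t) x = 0)
    -- v = 0 and v_xx = 0 at x ∈ {0,1}
    (hvbc : ∀ t ∈ Icc (0:ℝ) 1, v 0 t = 0 ∧ v 1 t = 0 ∧
      iteratedDeriv 2 (fun y => v y t) 0 = 0 ∧ iteratedDeriv 2 (fun y => v y t) 1 = 0)
    -- ∂_t z + ∂_x (z v) = 0
    (hzconsv : ∀ x ∈ Ioo (0:ℝ) 1, ∀ t ∈ Ioo (0:ℝ) 1,
      deriv (fun s => z x s) t + deriv (fun y => z y t * v y t) x = 0)
    -- z₁ = ∂_t f₁ + v ∂_x f₁ + v₁ ∂_x f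
    (hz₁def : ∀ x ∈ Icc (0:ℝ) 1, ∀ t ∈ Icc (0:ℝ) 1,
      z₁ x t = deriv (fun s => f₁ x s) t + v x t * deriv (fun y => f₁ y t) x
        + v₁ x t * deriv (fun y => f y t) x)
    -- ∂_t z₁ + ∂_x (z v₁ + z₁ v) = 0
    (hz₁consv : ∀ x ∈ Ioo (0:ℝ) 1, ∀ t ∈ Ioo (0:ℝ) 1,
      deriv (fun s => z₁ x s) t + deriv (fun y => z y t * v₁ y t + z₁ y t * v y t) x = 0)
    -- ε (v₁)_xxxx − λ (v₁)_xx + κ v₁ + z (f₁)_x + z₁ f_x = 0 on (0,1)²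
    (hEL1lin : ∀ x ∈ Ioo (0:ℝ) 1, ∀ t ∈ Ioo (0:ℝ) 1,
      ε * iteratedDeriv 4 (fun y => v₁ y t) x - lam * iteratedDeriv 2 (fun y => v₁ y t) x
        + κ * v₁ x t + z x t * deriv (fun y => f₁ y t) x
        + z₁ x t * deriv (fun y => f y t) x = 0)
    -- v₁ = 0 and (v₁)_xx = 0 at x ∈ {0,1}
    (hv₁bc : ∀ t ∈ Icc (0:ℝ) 1, v₁ 0 t = 0 ∧ v₁ 1 t = 0 ∧
      iteratedDeriv 2 (fun y => v₁ y t) 0 = 0 ∧ iteratedDeriv 2 (fun y => v₁ y t) 1 = 0)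
    -- f₁(x,0) = θ(x) and f₁(x,1) = 0 for all x
    (hf₁bc : ∀ x ∈ Icc (0:ℝ) 1, f₁ x 0 = θ x ∧ f₁ x 1 = 0) :
    (∫ t in (0:ℝ)..1, ∫ x in (0:ℝ)..1,
        (κ * (v₁ x t) ^ 2
          + lam * (deriv (fun y => v₁ y t) x) ^ 2
          + ε * (iteratedDeriv 2 (fun y => v₁ y t) x) ^ 2
          + (z₁ x t) ^ 2
          + 2 * z x t * deriv (fun y => f₁ y t) x * v₁ x t))
      = -∫ x in (0:ℝ)..1, z₁ x 0 * θ x := by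
  -- extended linearized EL on the closed square
  have hEL' : ∀ x ∈ Icc (0:ℝ) 1, ∀ t ∈ Icc (0:ℝ) 1,
      ε * iteratedDeriv 4 (fun y => v₁ y t) x - lam * iteratedDeriv 2 (fun y => v₁ y t) x
        + κ * v₁ x t + z x t * deriv (fun y => f₁ y t) x
        + z₁ x t * deriv (fun y => f y t) x = 0 := by
    have hG : Continuous (fun p : ℝ × ℝ =>
        ε * iteratedDeriv 4 (fun y => v₁ y p.2) p.1
          - lam * iteratedDeriv 2 (fun y => v₁ y p.2) p.1
          + κ * v₁ p.1 p.2 + z p.1 p.2 * deriv (fun y => f₁ y p.2) p.1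
          + z₁ p.1 p.2 * deriv (fun y => f y p.2) p.1) := by
      exact ((((continuous_const.mul (Dxn_contDiff hv₁ 4).continuous).sub
        (continuous_const.mul (Dxn_contDiff hv₁ 2).continuous)).add
        (continuous_const.mul hv₁.continuous)).add
        (hz.continuous.mul (Dx_contDiff hf₁).continuous)).add
        (hz₁.continuous.mul (Dx_contDiff hf).continuous)
    exact extend_zero hG (fun x hx t ht => hEL1lin x hx t ht)
  -- extended linearized conservation law on the closed square
  have hcons' : ∀ x ∈ Icc (0:ℝ) 1, ∀ t ∈ Icc (0:ℝ) 1,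
      deriv (fun s => z₁ x s) t
        + deriv (fun y => z y t * v₁ y t + z₁ y t * v y t) x = 0 := by
    have hW : ContDiff ℝ (⊤ : ℕ∞) (fun p : ℝ × ℝ => z p.1 p.2 * v₁ p.1 p.2 + z₁ p.1 p.2 * v p.1 p.2) :=
      (hz.mul hv₁).add (hz₁.mul hv)
    have hG : Continuous (fun p : ℝ × ℝ => deriv (fun s => z₁ p.1 s) p.2
        + deriv (fun y => z y p.2 * v₁ y p.2 + z₁ y p.2 * v y p.2) p.1) :=
      (Dt_contDiff hz₁).continuous.add
        (Dx_contDiff (F := fun x t => z x t * v₁ x t + z₁ x t * v x t) hW).continuous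
    exact extend_zero hG (fun x hx t ht => hz₁consv x hx t ht)
  -- the spatial-integral identity, for each time in [0,1]
  have key : ∀ t ∈ Icc (0:ℝ) 1,
      (∫ x in (0:ℝ)..1,
        (κ * (v₁ x t) ^ 2
          + lam * (deriv (fun y => v₁ y t) x) ^ 2
          + ε * (iteratedDeriv 2 (fun y => v₁ y t) x) ^ 2
          + (z₁ x t) ^ 2
          + 2 * z x t * deriv (fun y => f₁ y t) x * v₁ x t))
      = ∫ x in (0:ℝ)..1,
          (deriv (fun s => z₁ x s * f₁ x s) t
            + deriv (fun y => (z y t * v₁ y t + z₁ y t * v y t) * f₁ y t) x) := by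
    intro t ht
    set g : ℝ → ℝ := fun y => v₁ y t with hgdef
    have hg : ContDiff ℝ ((⊤:ℕ∞)) g := (slice_x hv₁ t).of_le (by simp)
    obtain ⟨hb0, hb1, hb20, hb21⟩ := hv₁bc t ht
    have E1 : ∫ x in (0:ℝ)..1, iteratedDeriv 4 g x * g x
        = ∫ x in (0:ℝ)..1, (iteratedDeriv 2 g x) ^ 2 := ibp_four hg hb0 hb1 hb20 hb21
    have E2 : ∫ x in (0:ℝ)..1, iteratedDeriv 2 g x * g x
        = -∫ x in (0:ℝ)..1, (deriv g x) ^ 2 := ibp_two hg hb0 hb1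
    -- continuity facts at fixed t
    have ci2 : Continuous (iteratedDeriv 2 g) :=
      ContDiff.continuous_iteratedDeriv 2 (slice_x hv₁ t) (WithTop.coe_le_coe.mpr le_top)
    have ci4 : Continuous (iteratedDeriv 4 g) :=
      ContDiff.continuous_iteratedDeriv 4 (slice_x hv₁ t) (WithTop.coe_le_coe.mpr le_top)
    have cdg : Continuous (deriv g) := (contDiff_deriv_inf hg).continuous
    have cg : Continuous g := hg.continuous
    have cz : Continuous (fun x => z x t) := (slice_x hz t).continuous
    have cz₁ : Continuous (fun x => z₁ x t) := (slice_x hz₁ t).continuous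
    have cf₁x : Continuous (fun x => deriv (fun y => f₁ y t) x) :=
      (contDiff_deriv_inf ((slice_x hf₁ t).of_le (by simp))).continuous
    have cfx : Continuous (fun x => deriv (fun y => f y t) x) :=
      (contDiff_deriv_inf ((slice_x hf t).of_le (by simp))).continuous
    have cbase : Continuous (fun x => κ * g x ^ 2 + (z₁ x t) ^ 2
        + 2 * z x t * deriv (fun y => f₁ y t) x * g x) := by fun_prop
    -- split off the two higher order terms
    have hsplit : (∫ x in (0:ℝ)..1,
        (κ * (v₁ x t) ^ 2
          + lam * (deriv (fun y => v₁ y t) x) ^ 2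
          + ε * (iteratedDeriv 2 (fun y => v₁ y t) x) ^ 2
          + (z₁ x t) ^ 2
          + 2 * z x t * deriv (fun y => f₁ y t) x * v₁ x t))
        = (∫ x in (0:ℝ)..1, (κ * g x ^ 2 + (z₁ x t) ^ 2
            + 2 * z x t * deriv (fun y => f₁ y t) x * g x))
          + lam * (∫ x in (0:ℝ)..1, (deriv g x) ^ 2)
          + ε * (∫ x in (0:ℝ)..1, (iteratedDeriv 2 g x) ^ 2) := by
      rw [← intervalIntegral.integral_const_mul, ← intervalIntegral.integral_const_mul,
        ← intervalIntegral.integral_add (f := fun x => κ * g x ^ 2 + (z₁ x t) ^ 2 + 2 * z x t * deriv (fun y => f₁ y t) x * g x)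
          (g := fun x => lam * deriv g x ^ 2)
          (cbase.intervalIntegrable 0 1)
          ((continuous_const.mul (cdg.pow 2)).intervalIntegrable 0 1),
        ← intervalIntegral.integral_add (f := fun x => (κ * g x ^ 2 + (z₁ x t) ^ 2 + 2 * z x t * deriv (fun y => f₁ y t) x * g x) + lam * deriv g x ^ 2)
          (g := fun x => ε * iteratedDeriv 2 g x ^ 2)
          ((cbase.add (continuous_const.mul (cdg.pow 2))).intervalIntegrable 0 1)
          ((continuous_const.mul (ci2.pow 2)).intervalIntegrable 0 1)]
      apply intervalIntegral.integral_congr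
      intro x _
      simp only [hgdef]
      ring
    rw [hsplit, E1.symm, ← neg_neg (∫ x in (0:ℝ)..1, (deriv g x) ^ 2), ← E2]
    -- recombine into a single integral
    have hrecomb : (∫ x in (0:ℝ)..1, (κ * g x ^ 2 + (z₁ x t) ^ 2
            + 2 * z x t * deriv (fun y => f₁ y t) x * g x))
          + lam * -(∫ x in (0:ℝ)..1, iteratedDeriv 2 g x * g x)
          + ε * (∫ x in (0:ℝ)..1, iteratedDeriv 4 g x * g x)
        = ∫ x in (0:ℝ)..1, ((κ * g x ^ 2 + (z₁ x t) ^ 2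
            + 2 * z x t * deriv (fun y => f₁ y t) x * g x)
            + (-lam) * (iteratedDeriv 2 g x * g x)
            + ε * (iteratedDeriv 4 g x * g x)) := by
      rw [intervalIntegral.integral_add
          (f := fun x => (κ * g x ^ 2 + (z₁ x t) ^ 2 + 2 * z x t * deriv (fun y => f₁ y t) x * g x) + (-lam) * (iteratedDeriv 2 g x * g x))
          (g := fun x => ε * (iteratedDeriv 4 g x * g x))
          (((cbase.add (continuous_const.mul (ci2.mul cg)))).intervalIntegrable 0 1)
          ((continuous_const.mul (ci4.mul cg)).intervalIntegrable 0 1),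
        intervalIntegral.integral_add (f := fun x => κ * g x ^ 2 + (z₁ x t) ^ 2 + 2 * z x t * deriv (fun y => f₁ y t) x * g x)
          (g := fun x => (-lam) * (iteratedDeriv 2 g x * g x))
          (cbase.intervalIntegrable 0 1)
          ((continuous_const.mul (ci2.mul cg)).intervalIntegrable 0 1),
        intervalIntegral.integral_const_mul, intervalIntegral.integral_const_mul]
      ring
    rw [hrecomb]
    -- pointwise identity on [0,1]
    apply intervalIntegral.integral_congr
    intro x hx
    rw [uIcc_of_le (zero_le_one (α := ℝ))] at hx
    have hel := hEL' x hx t ht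
    have hqz := hz₁def x hx t ht
    have hcz := hcons' x hx t ht
    -- expand the two derivatives of products
    have d1 : deriv (fun s => z₁ x s * f₁ x s) t
        = deriv (fun s => z₁ x s) t * f₁ x t + z₁ x t * deriv (fun s => f₁ x s) t := by
      exact deriv_fun_mul ((slice_t hz₁ x).differentiable (by simp) t)
        ((slice_t hf₁ x).differentiable (by simp) t)
    have hWs : ContDiff ℝ (⊤ : ℕ∞) (fun y => z y t * v₁ y t + z₁ y t * v y t) :=
      ((slice_x hz t).mul (slice_x hv₁ t)).add ((slice_x hz₁ t).mul (slice_x hv t))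
    have d2 : deriv (fun y => (z y t * v₁ y t + z₁ y t * v y t) * f₁ y t) x
        = deriv (fun y => z y t * v₁ y t + z₁ y t * v y t) x * f₁ x t
          + (z x t * v₁ x t + z₁ x t * v x t) * deriv (fun y => f₁ y t) x := by
      exact deriv_fun_mul (hWs.differentiable (by simp) x)
        ((slice_x hf₁ t).differentiable (by simp) x)
    simp only [d1, d2, hgdef]
    linear_combination (v₁ x t) * hel + (z₁ x t) * hqz - (f₁ x t) * hcz
  -- kill the x-boundary term and reduce to the t-derivative
  have hWF : ContDiff ℝ (⊤ : ℕ∞) (fun p : ℝ × ℝ =>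
      (z p.1 p.2 * v₁ p.1 p.2 + z₁ p.1 p.2 * v p.1 p.2) * f₁ p.1 p.2) :=
    ((hz.mul hv₁).add (hz₁.mul hv)).mul hf₁
  have hZF : ContDiff ℝ (⊤ : ℕ∞) (fun p : ℝ × ℝ => z₁ p.1 p.2 * f₁ p.1 p.2) := hz₁.mul hf₁
  have step2 : ∀ t ∈ Icc (0:ℝ) 1,
      (∫ x in (0:ℝ)..1,
          (deriv (fun s => z₁ x s * f₁ x s) t
            + deriv (fun y => (z y t * v₁ y t + z₁ y t * v y t) * f₁ y t) x))
        = ∫ x in (0:ℝ)..1, deriv (fun s => z₁ x s * f₁ x s) t := by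
    intro t ht
    have c1 : Continuous (fun x => deriv (fun s => z₁ x s * f₁ x s) t) :=
      (Dt_contDiff (F := fun a b => z₁ a b * f₁ a b) hZF).continuous.comp
        (continuous_id.prodMk continuous_const)
    have hWFs : ContDiff ℝ ((⊤:ℕ∞)) (fun y => (z y t * v₁ y t + z₁ y t * v y t) * f₁ y t) :=
      (slice_x (F := fun a b => (z a b * v₁ a b + z₁ a b * v a b) * f₁ a b) hWF t).of_le (by simp)
    have c2 : Continuous (fun x =>
        deriv (fun y => (z y t * v₁ y t + z₁ y t * v y t) * f₁ y t) x) :=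
      (contDiff_deriv_inf hWFs).continuous
    rw [intervalIntegral.integral_add (c1.intervalIntegrable 0 1) (c2.intervalIntegrable 0 1)]
    have hftc := ftc01 hWFs
    obtain ⟨ha0, ha1, -, -⟩ := hvbc t ht
    obtain ⟨hb0, hb1, -, -⟩ := hv₁bc t ht
    rw [hftc, ha0, ha1, hb0, hb1]
    ring
  -- assemble
  calc (∫ t in (0:ℝ)..1, ∫ x in (0:ℝ)..1,
        (κ * (v₁ x t) ^ 2
          + lam * (deriv (fun y => v₁ y t) x) ^ 2
          + ε * (iteratedDeriv 2 (fun y => v₁ y t) x) ^ 2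
          + (z₁ x t) ^ 2
          + 2 * z x t * deriv (fun y => f₁ y t) x * v₁ x t))
      = ∫ t in (0:ℝ)..1, ∫ x in (0:ℝ)..1, deriv (fun s => z₁ x s * f₁ x s) t := by
        apply intervalIntegral.integral_congr
        intro t ht
        rw [uIcc_of_le (zero_le_one (α := ℝ))] at ht
        exact (key t ht).trans (step2 t ht)
    _ = ∫ x in (0:ℝ)..1, ∫ t in (0:ℝ)..1, deriv (fun s => z₁ x s * f₁ x s) t := by
        exact swap01 (G := fun x t => deriv (fun s => z₁ x s * f₁ x s) t)
          (Dt_contDiff (F := fun a b => z₁ a b * f₁ a b) hZF).continuous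
    _ = ∫ x in (0:ℝ)..1, -(z₁ x 0 * θ x) := by
        apply intervalIntegral.integral_congr
        intro x hx
        rw [uIcc_of_le (zero_le_one (α := ℝ))] at hx
        have hftc := ftc01 ((slice_t (F := fun a b => z₁ a b * f₁ a b) hZF x).of_le (by simp))
        obtain ⟨hc0, hc1⟩ := hf₁bc x hx
        show (∫ t in (0:ℝ)..1, deriv (fun s => z₁ x s * f₁ x s) t) = -(z₁ x 0 * θ x)
        rw [hftc, hc0, hc1]
        ring
    _ = -∫ x in (0:ℝ)..1, z₁ x 0 * θ x := intervalIntegral.integral_neg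
end

section
/- Let κ,ε>0, λ≥0, and let ρ : [0,1] → ℝ be a differentiable function whose derivative ρ_x is continuous and nowhere zero on [0,1]. Let v,w : [0,1] → ℝ be functions such that v/ρ_x and w/ρ_x are four times continuously differentiable, with v(0)=v(1)=w(0)=w(1)=0 and (v/ρ_x)''(0)=(v/ρ_x)''(1)=(w/ρ_x)''(0)=(w/ρ_x)''(1)=0. Then ∫₀¹ (Bv)(x) w(x) dx = ∫₀¹ v(x) (Bw)(x) dx, i.e., the operator B is symmetric with respect to the L²(0,1) inner product. -/
open MeasureTheory Set intervalIntegral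

/-!
Writing `F = v / ρ_x` and `G = w / ρ_x`, one has pointwise
`(Bv) w = (ε F'''' - λ F'') G + F G (κ + ρ_x²)`, and symmetrically for `v (Bw)`.
The zeroth-order term is the same on both sides, and integrating by parts moves all derivatives
from `F` onto `G`: twice for `F''`, four times for `F''''`. Every boundary term contains a factor
`F`, `G`, `F''` or `G''` evaluated at `0` or `1`, which vanishes.
-/

/-- The operator `B` associated with the HV Hessian:
`Bv = (1/ρ_x)[ε (v/ρ_x)'''' − λ (v/ρ_x)'' + (v/ρ_x)(κ + ρ_x²)]`,
where `ρx` denotes the derivative `ρ_x`. -/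
noncomputable def Bop (κ lam ε : ℝ) (ρx : ℝ → ℝ) (v : ℝ → ℝ) (x : ℝ) : ℝ :=
  (1 / ρx x) * (ε * iteratedDeriv 4 (fun y => v y / ρx y) x
    - lam * iteratedDeriv 2 (fun y => v y / ρx y) x
    + (v x / ρx x) * (κ + (ρx x) ^ 2))

lemma ContDiff.contDiff_one_iteratedDeriv {f : ℝ → ℝ} {n k : ℕ} (hf : ContDiff ℝ n f)
    (hk : k < n) : ContDiff ℝ 1 (iteratedDeriv k f) :=
  (contDiff_nat_succ_iff_contDiff_one_iteratedDeriv.mp (hf.of_le (mod_cast hk))).2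

namespace intervalIntegral

variable {a b : ℝ} {f g u : ℝ → ℝ}

theorem integral_deriv_mul_eq_neg_integral_mul_deriv (hu : ContDiff ℝ 1 u)
    (hg : ContDiff ℝ 1 g) (ha : u a * g a = 0) (hb : u b * g b = 0) :
    ∫ x in a..b, deriv u x * g x = -∫ x in a..b, u x * deriv g x := by
  have := integral_mul_deriv_eq_deriv_mul (a := a) (b := b)
    (fun x _ => ((hu.differentiable one_ne_zero) x).hasDerivAt)
    (fun x _ => ((hg.differentiable one_ne_zero) x).hasDerivAt)
    ((hu.continuous_deriv le_rfl).intervalIntegrable a b)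
    ((hg.continuous_deriv le_rfl).intervalIntegrable a b)
  linarith

theorem integral_iteratedDeriv_two_mul_eq (hf : ContDiff ℝ 2 f) (hg : ContDiff ℝ 1 g)
    (hga : g a = 0) (hgb : g b = 0) :
    ∫ x in a..b, iteratedDeriv 2 f x * g x = -∫ x in a..b, deriv f x * deriv g x := by
  rw [iteratedDeriv_succ, integral_deriv_mul_eq_neg_integral_mul_deriv
    (hf.contDiff_one_iteratedDeriv (by norm_num)) hg (by simp [hga]) (by simp [hgb]),
    iteratedDeriv_one]

theorem integral_iteratedDeriv_two_mul_comm (hf : ContDiff ℝ 2 f) (hg : ContDiff ℝ 2 g)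
    (hfa : f a = 0) (hfb : f b = 0) (hga : g a = 0) (hgb : g b = 0) :
    ∫ x in a..b, iteratedDeriv 2 f x * g x = ∫ x in a..b, iteratedDeriv 2 g x * f x := by
  rw [integral_iteratedDeriv_two_mul_eq hf (hg.of_le (by norm_num)) hga hgb,
    integral_iteratedDeriv_two_mul_eq hg (hf.of_le (by norm_num)) hfa hfb]
  simp only [mul_comm]

theorem integral_iteratedDeriv_four_mul_eq (hf : ContDiff ℝ 4 f) (hg : ContDiff ℝ 2 g)
    (hga : g a = 0) (hgb : g b = 0)
    (hf''a : iteratedDeriv 2 f a = 0) (hf''b : iteratedDeriv 2 f b = 0) :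
    ∫ x in a..b, iteratedDeriv 4 f x * g x
      = ∫ x in a..b, iteratedDeriv 2 f x * iteratedDeriv 2 g x := by
  calc ∫ x in a..b, iteratedDeriv 4 f x * g x
      = -∫ x in a..b, iteratedDeriv 3 f x * deriv g x := by
        rw [iteratedDeriv_succ]
        exact integral_deriv_mul_eq_neg_integral_mul_deriv
          (hf.contDiff_one_iteratedDeriv (by norm_num)) (hg.of_le (by norm_num))
          (by simp [hga]) (by simp [hgb])
    _ = ∫ x in a..b, iteratedDeriv 2 f x * iteratedDeriv 2 g x := by
        rw [iteratedDeriv_succ, integral_deriv_mul_eq_neg_integral_mul_deriv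
          (hf.contDiff_one_iteratedDeriv (by norm_num))
          (by simpa using hg.contDiff_one_iteratedDeriv (k := 1) (by norm_num))
          (by simp [hf''a]) (by simp [hf''b]), neg_neg, ← iteratedDeriv_one (f := g),
          ← iteratedDeriv_succ]

theorem integral_iteratedDeriv_four_mul_comm (hf : ContDiff ℝ 4 f) (hg : ContDiff ℝ 4 g)
    (hfa : f a = 0) (hfb : f b = 0) (hga : g a = 0) (hgb : g b = 0)
    (hf''a : iteratedDeriv 2 f a = 0) (hf''b : iteratedDeriv 2 f b = 0)
    (hg''a : iteratedDeriv 2 g a = 0) (hg''b : iteratedDeriv 2 g b = 0) :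
    ∫ x in a..b, iteratedDeriv 4 f x * g x = ∫ x in a..b, iteratedDeriv 4 g x * f x := by
  rw [integral_iteratedDeriv_four_mul_eq hf (hg.of_le (by norm_num)) hga hgb hf''a hf''b,
    integral_iteratedDeriv_four_mul_eq hg (hf.of_le (by norm_num)) hfa hfb hg''a hg''b]
  simp only [mul_comm]

theorem integral_add_eq_integral_add_of_integral_eq {p q : ℝ → ℝ}
    (h : ℝ → ℝ) (hp : IntervalIntegrable p volume a b) (hq : IntervalIntegrable q volume a b)
    (hpq : ∫ x in a..b, p x = ∫ x in a..b, q x) :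
    ∫ x in a..b, p x + h x = ∫ x in a..b, q x + h x := by
  by_cases hh : IntervalIntegrable h volume a b
  · rw [integral_add hp hh, integral_add hq hh, hpq]
  · -- otherwise neither integrand is integrable and both integrals take the junk value `0`
    have hnot {r : ℝ → ℝ} (hr : IntervalIntegrable r volume a b) :
        ¬IntervalIntegrable (fun x => r x + h x) volume a b := fun hrh =>
      hh (by simpa using hrh.sub hr)
    rw [integral_undef (hnot hp), integral_undef (hnot hq)]

end intervalIntegral

noncomputable def fourthOrderOp (ε lam : ℝ) (f : ℝ → ℝ) (x : ℝ) : ℝ :=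
  ε * iteratedDeriv 4 f x - lam * iteratedDeriv 2 f x

theorem ContDiff.continuous_fourthOrderOp {f : ℝ → ℝ} (hf : ContDiff ℝ 4 f) (ε lam : ℝ) :
    Continuous (fourthOrderOp ε lam f) :=
  (continuous_const.mul (hf.continuous_iteratedDeriv 4 le_rfl)).sub
    (continuous_const.mul (hf.continuous_iteratedDeriv 2 (by norm_num)))

theorem integral_fourthOrderOp_mul_comm {a b : ℝ} (ε lam : ℝ) {f g : ℝ → ℝ}
    (hf : ContDiff ℝ 4 f) (hg : ContDiff ℝ 4 g)
    (hfa : f a = 0) (hfb : f b = 0) (hga : g a = 0) (hgb : g b = 0)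
    (hf''a : iteratedDeriv 2 f a = 0) (hf''b : iteratedDeriv 2 f b = 0)
    (hg''a : iteratedDeriv 2 g a = 0) (hg''b : iteratedDeriv 2 g b = 0) :
    ∫ x in a..b, fourthOrderOp ε lam f x * g x = ∫ x in a..b, fourthOrderOp ε lam g x * f x := by
  have expand {h k : ℝ → ℝ} (hh : ContDiff ℝ 4 h) (hk : Continuous k) :
      ∫ x in a..b, fourthOrderOp ε lam h x * k x
        = ε * (∫ x in a..b, iteratedDeriv 4 h x * k x)
          - lam * ∫ x in a..b, iteratedDeriv 2 h x * k x := by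
    have h4 := hh.continuous_iteratedDeriv 4 le_rfl
    have h2 := hh.continuous_iteratedDeriv 2 (by norm_num)
    simp only [fourthOrderOp, sub_mul, mul_assoc]
    rw [intervalIntegral.integral_sub, intervalIntegral.integral_const_mul,
      intervalIntegral.integral_const_mul]
    all_goals apply Continuous.intervalIntegrable; fun_prop
  rw [expand hf hg.continuous, expand hg hf.continuous,
    integral_iteratedDeriv_four_mul_comm hf hg hfa hfb hga hgb hf''a hf''b hg''a hg''b,
    integral_iteratedDeriv_two_mul_comm (hf.of_le (by norm_num)) (hg.of_le (by norm_num))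
      hfa hfb hga hgb]

theorem Bop_mul_eq (κ lam ε : ℝ) (ρx v w : ℝ → ℝ) (x : ℝ) :
    Bop κ lam ε ρx v x * w x
      = fourthOrderOp ε lam (fun y => v y / ρx y) x * (w x / ρx x)
        + v x / ρx x * (w x / ρx x) * (κ + ρx x ^ 2) := by
  simp only [Bop, fourthOrderOp]
  ring

theorem Bop_symmetric_general
    (κ lam ε : ℝ)
    (ρ : ℝ → ℝ)
    (v w : ℝ → ℝ)
    (hv : ContDiff ℝ 4 (fun x => v x / deriv ρ x))
    (hw : ContDiff ℝ 4 (fun x => w x / deriv ρ x))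
    (hv0 : v 0 = 0) (hv1 : v 1 = 0) (hw0 : w 0 = 0) (hw1 : w 1 = 0)
    (hv''0 : iteratedDeriv 2 (fun x => v x / deriv ρ x) 0 = 0)
    (hv''1 : iteratedDeriv 2 (fun x => v x / deriv ρ x) 1 = 0)
    (hw''0 : iteratedDeriv 2 (fun x => w x / deriv ρ x) 0 = 0)
    (hw''1 : iteratedDeriv 2 (fun x => w x / deriv ρ x) 1 = 0) :
    ∫ x in (0:ℝ)..1, Bop κ lam ε (deriv ρ) v x * w x
      = ∫ x in (0:ℝ)..1, v x * Bop κ lam ε (deriv ρ) w x := by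
  calc ∫ x in (0:ℝ)..1, Bop κ lam ε (deriv ρ) v x * w x
      = ∫ x in (0:ℝ)..1, fourthOrderOp ε lam (fun y => v y / deriv ρ y) x * (w x / deriv ρ x)
          + v x / deriv ρ x * (w x / deriv ρ x) * (κ + deriv ρ x ^ 2) :=
        integral_congr fun x _ => Bop_mul_eq ..
    _ = ∫ x in (0:ℝ)..1, fourthOrderOp ε lam (fun y => w y / deriv ρ y) x * (v x / deriv ρ x)
          + v x / deriv ρ x * (w x / deriv ρ x) * (κ + deriv ρ x ^ 2) :=
        integral_add_eq_integral_add_of_integral_eq _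
          (((hv.continuous_fourthOrderOp ε lam).mul hw.continuous).intervalIntegrable 0 1)
          (((hw.continuous_fourthOrderOp ε lam).mul hv.continuous).intervalIntegrable 0 1)
          (integral_fourthOrderOp_mul_comm ε lam hv hw (by simp [hv0]) (by simp [hv1])
            (by simp [hw0]) (by simp [hw1]) hv''0 hv''1 hw''0 hw''1)
    _ = ∫ x in (0:ℝ)..1, v x * Bop κ lam ε (deriv ρ) w x :=
        integral_congr fun x _ => by rw [mul_comm (v x), Bop_mul_eq]; ring

/-- The operator `B` is symmetric with respect to the `L²(0,1)`
inner product: `∫₀¹ (Bv) w = ∫₀¹ v (Bw)` for `v, w` satisfying the boundary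
conditions `v = w = 0` and `(v/ρ_x)'' = (w/ρ_x)'' = 0` at `x ∈ {0,1}`. -/
theorem Bop_symmetric
    (κ lam ε : ℝ) (hκ : 0 < κ) (hε : 0 < ε) (hlam : 0 ≤ lam)
    (ρ : ℝ → ℝ) (hρ : Differentiable ℝ ρ) (hρx : Continuous (deriv ρ))
    (hρxne : ∀ x ∈ Icc (0:ℝ) 1, deriv ρ x ≠ 0)
    (v w : ℝ → ℝ)
    (hv : ContDiff ℝ 4 (fun x => v x / deriv ρ x))
    (hw : ContDiff ℝ 4 (fun x => w x / deriv ρ x))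
    (hv0 : v 0 = 0) (hv1 : v 1 = 0) (hw0 : w 0 = 0) (hw1 : w 1 = 0)
    (hv''0 : iteratedDeriv 2 (fun x => v x / deriv ρ x) 0 = 0)
    (hv''1 : iteratedDeriv 2 (fun x => v x / deriv ρ x) 1 = 0)
    (hw''0 : iteratedDeriv 2 (fun x => w x / deriv ρ x) 0 = 0)
    (hw''1 : iteratedDeriv 2 (fun x => w x / deriv ρ x) 1 = 0) :
    ∫ x in (0:ℝ)..1, Bop κ lam ε (deriv ρ) v x * w x
      = ∫ x in (0:ℝ)..1, v x * Bop κ lam ε (deriv ρ) w x :=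
  Bop_symmetric_general κ lam ε ρ v w hv hw hv0 hv1 hw0 hw1 hv''0 hv''1 hw''0 hw''1
end

section
/- Let κ,ε>0, λ≥0, M>0, and let ρ : [0,1] → ℝ be differentiable with continuous derivative ρ_x satisfying |ρ_x(x)| ≤ M on [0,1] and ρ_x nowhere zero. Let θ ∈ L²(0,1). Suppose u satisfies Bu = θ (with u/ρ_x four times continuously differentiable, u(0)=u(1)=0, (u/ρ_x)''(0)=(u/ρ_x)''(1)=0), and suppose w_M is four times continuously differentiable with ε w_M'''' − λ w_M'' + (κ+M²) w_M = ρ_x θ on (0,1) and w_M(0)=w_M(1)=w_M''(0)=w_M''(1)=0. Then ∫₀¹ θ u dx ≥ ∫₀¹ (θ ρ_x) w_M dx; equivalently, ∫₀¹ θ² − ∫₀¹ θ u ≤ ∫₀¹ θ² − ∫₀¹ (θρ_x) w_M, i.e., I − B^{-1} ⪯ I − M_{ρ_x} L_M^{-1} M_{ρ_x}. -/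
open MeasureTheory Set intervalIntegral

theorem ContDiff.hasDerivAt_iteratedDeriv {f : ℝ → ℝ} {n : ℕ} (hf : ContDiff ℝ (n + 1) f)
    (x : ℝ) : HasDerivAt (iteratedDeriv n f) (iteratedDeriv (n + 1) f x) x := by
  rw [iteratedDeriv_succ]
  exact (hf.differentiable_iteratedDeriv' n x).hasDerivAt

section IntegrationByParts

variable {a b : ℝ} {f h : ℝ → ℝ}

theorem integral_iteratedDeriv_succ_mul {n m : ℕ} (hf : ContDiff ℝ (n + 1) f)
    (hh : ContDiff ℝ (m + 1) h) (ha : iteratedDeriv m h a = 0) (hb : iteratedDeriv m h b = 0) :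
    ∫ x in a..b, iteratedDeriv (n + 1) f x * iteratedDeriv m h x
      = -∫ x in a..b, iteratedDeriv n f x * iteratedDeriv (m + 1) h x := by
  have := integral_mul_deriv_eq_deriv_mul (a := a) (b := b)
    (fun x _ => hh.hasDerivAt_iteratedDeriv x) (fun x _ => hf.hasDerivAt_iteratedDeriv x)
    ((hh.continuous_iteratedDeriv' (m + 1)).intervalIntegrable a b)
    ((hf.continuous_iteratedDeriv' (n + 1)).intervalIntegrable a b)
  rw [ha, hb, zero_mul, zero_mul, sub_zero, zero_sub] at this
  simp only [mul_comm (iteratedDeriv m h _), mul_comm (iteratedDeriv (m + 1) h _)] at this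
  exact this

theorem integral_iteratedDeriv_four_mul (hf : ContDiff ℝ 4 f) (hh : ContDiff ℝ 2 h)
    (hfa : iteratedDeriv 2 f a = 0) (hfb : iteratedDeriv 2 f b = 0)
    (hha : h a = 0) (hhb : h b = 0) :
    ∫ x in a..b, iteratedDeriv 4 f x * h x
      = ∫ x in a..b, iteratedDeriv 2 f x * iteratedDeriv 2 h x := by
  have move_to_h :=
    integral_iteratedDeriv_succ_mul (n := 3) (m := 0) hf (hh.of_le (by norm_num)) hha hhb
  have move_to_f := integral_iteratedDeriv_succ_mul (n := 1) (m := 2) hh (hf.of_le (by norm_num))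
    hfa hfb
  simp only [iteratedDeriv_zero, Nat.reduceAdd] at move_to_h move_to_f
  simp only [mul_comm (iteratedDeriv 2 h _), mul_comm (iteratedDeriv 1 h _)] at move_to_f
  rw [move_to_h, move_to_f]

theorem integral_iteratedDeriv_two_mul (hf : ContDiff ℝ 2 f) (hh : ContDiff ℝ 1 h)
    (hha : h a = 0) (hhb : h b = 0) :
    ∫ x in a..b, iteratedDeriv 2 f x * h x
      = -∫ x in a..b, iteratedDeriv 1 f x * iteratedDeriv 1 h x := by
  simpa only [iteratedDeriv_zero] using
    integral_iteratedDeriv_succ_mul (n := 1) (m := 0) hf (by simpa using hh) hha hhb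

end IntegrationByParts

/-- The paper's `L_c` with a variable coefficient: `c = ρ_x²` gives `ρ_x B ρ_x` and `c = M²`
gives `L_M`. -/
noncomputable def beamOp (κ lam ε : ℝ) (c y : ℝ → ℝ) (x : ℝ) : ℝ :=
  ε * iteratedDeriv 4 y x - lam * iteratedDeriv 2 y x + (κ + c x) * y x

noncomputable def energyForm (κ lam ε : ℝ) (c : ℝ → ℝ) (a b : ℝ) (f h : ℝ → ℝ) : ℝ :=
  ∫ x in a..b, ε * (iteratedDeriv 2 f x * iteratedDeriv 2 h x)
    + lam * (iteratedDeriv 1 f x * iteratedDeriv 1 h x) + (κ + c x) * (f x * h x)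

section EnergyForm

variable {κ lam ε : ℝ} {c : ℝ → ℝ} {a b : ℝ} {f h : ℝ → ℝ}

theorem integral_beamOp_mul (hc : Continuous c) (hf : ContDiff ℝ 4 f) (hh : ContDiff ℝ 2 h)
    (hfa : iteratedDeriv 2 f a = 0) (hfb : iteratedDeriv 2 f b = 0)
    (hha : h a = 0) (hhb : h b = 0) :
    ∫ x in a..b, beamOp κ lam ε c f x * h x = energyForm κ lam ε c a b f h := by
  have hf1 := hf.continuous_iteratedDeriv 1 (by norm_num)
  have hf2 := hf.continuous_iteratedDeriv 2 (by norm_num)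
  have hf4 := hf.continuous_iteratedDeriv 4 le_rfl
  have hh1 := hh.continuous_iteratedDeriv 1 (by norm_num)
  have hh2 := hh.continuous_iteratedDeriv 2 le_rfl
  have hf0 := hf.continuous
  have hh0 := hh.continuous
  calc ∫ x in a..b, beamOp κ lam ε c f x * h x
      = ε * (∫ x in a..b, iteratedDeriv 4 f x * h x)
          - lam * (∫ x in a..b, iteratedDeriv 2 f x * h x)
          + ∫ x in a..b, (κ + c x) * (f x * h x) := by
        rw [← intervalIntegral.integral_const_mul, ← intervalIntegral.integral_const_mul,
          ← intervalIntegral.integral_sub, ← intervalIntegral.integral_add]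
        · exact integral_congr fun x _ => by simp only [beamOp]; ring
        all_goals exact Continuous.intervalIntegrable (by fun_prop) a b
    _ = ε * (∫ x in a..b, iteratedDeriv 2 f x * iteratedDeriv 2 h x)
          + lam * (∫ x in a..b, iteratedDeriv 1 f x * iteratedDeriv 1 h x)
          + ∫ x in a..b, (κ + c x) * (f x * h x) := by
        rw [integral_iteratedDeriv_four_mul hf hh hfa hfb hha hhb,
          integral_iteratedDeriv_two_mul (hf.of_le (by norm_num)) (hh.of_le (by norm_num)) hha hhb]
        ring
    _ = energyForm κ lam ε c a b f h := by
        rw [energyForm, ← intervalIntegral.integral_const_mul,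
          ← intervalIntegral.integral_const_mul, ← intervalIntegral.integral_add,
          ← intervalIntegral.integral_add]
        all_goals exact Continuous.intervalIntegrable (by fun_prop) a b

theorem two_mul_energyForm_le_add (hab : a ≤ b) (hε : 0 ≤ ε) (hlam : 0 ≤ lam)
    (hκc : ∀ x ∈ Icc a b, 0 ≤ κ + c x) (hc : Continuous c)
    (hf : ContDiff ℝ 2 f) (hh : ContDiff ℝ 2 h) :
    2 * energyForm κ lam ε c a b f h
      ≤ energyForm κ lam ε c a b f f + energyForm κ lam ε c a b h h := by
  have hf1 := hf.continuous_iteratedDeriv 1 (by norm_num)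
  have hf2 := hf.continuous_iteratedDeriv 2 le_rfl
  have hh1 := hh.continuous_iteratedDeriv 1 (by norm_num)
  have hh2 := hh.continuous_iteratedDeriv 2 le_rfl
  have hf0 := hf.continuous
  have hh0 := hh.continuous
  rw [energyForm, energyForm, energyForm, ← intervalIntegral.integral_const_mul,
    ← intervalIntegral.integral_add]
  · refine integral_mono_on hab (Continuous.intervalIntegrable (by fun_prop) a b)
      (Continuous.intervalIntegrable (by fun_prop) a b) fun x hx => ?_
    nlinarith [mul_nonneg hε (sq_nonneg (iteratedDeriv 2 f x - iteratedDeriv 2 h x)),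
      mul_nonneg hlam (sq_nonneg (iteratedDeriv 1 f x - iteratedDeriv 1 h x)),
      mul_nonneg (hκc x hx) (sq_nonneg (f x - h x))]
  all_goals exact Continuous.intervalIntegrable (by fun_prop) a b

theorem energyForm_self_le_of_coeff_le {c' : ℝ → ℝ} (hab : a ≤ b)
    (hcc' : ∀ x ∈ Icc a b, c x ≤ c' x)
    (hc : Continuous c) (hc' : Continuous c') (hh : ContDiff ℝ 2 h) :
    energyForm κ lam ε c a b h h ≤ energyForm κ lam ε c' a b h h := by
  have hh1 := hh.continuous_iteratedDeriv 1 (by norm_num)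
  have hh2 := hh.continuous_iteratedDeriv 2 le_rfl
  have hh0 := hh.continuous
  refine integral_mono_on hab (Continuous.intervalIntegrable (by fun_prop) a b)
    (Continuous.intervalIntegrable (by fun_prop) a b) fun x hx => ?_
  nlinarith [mul_le_mul_of_nonneg_right (hcc' x hx) (mul_self_nonneg (h x))]

theorem integral_mul_le_of_beamOp_eq {c' F g w : ℝ → ℝ} (hab : a ≤ b)
    (hε : 0 ≤ ε) (hlam : 0 ≤ lam) (hκc : ∀ x ∈ Icc a b, 0 ≤ κ + c x)
    (hcc' : ∀ x ∈ Icc a b, c x ≤ c' x) (hc : Continuous c) (hc' : Continuous c')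
    (hg : ContDiff ℝ 4 g) (hga : g a = 0) (hgb : g b = 0)
    (hg2a : iteratedDeriv 2 g a = 0) (hg2b : iteratedDeriv 2 g b = 0)
    (hw : ContDiff ℝ 4 w) (hwa : w a = 0) (hwb : w b = 0)
    (hw2a : iteratedDeriv 2 w a = 0) (hw2b : iteratedDeriv 2 w b = 0)
    (hLg : ∀ x ∈ Ioo a b, beamOp κ lam ε c g x = F x)
    (hLw : ∀ x ∈ Ioo a b, beamOp κ lam ε c' w x = F x) :
    ∫ x in a..b, F x * w x ≤ ∫ x in a..b, F x * g x := by
  have hFw : ∫ x in a..b, F x * w x = energyForm κ lam ε c a b g w := by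
    rw [← integral_beamOp_mul hc hg (hw.of_le (by norm_num)) hg2a hg2b hwa hwb]
    exact integral_congr_Ioo_of_le hab fun x hx => by rw [hLg x hx]
  have hFw' : ∫ x in a..b, F x * w x = energyForm κ lam ε c' a b w w := by
    rw [← integral_beamOp_mul hc' hw (hw.of_le (by norm_num)) hw2a hw2b hwa hwb]
    exact integral_congr_Ioo_of_le hab fun x hx => by rw [hLw x hx]
  have hFg : ∫ x in a..b, F x * g x = energyForm κ lam ε c a b g g := by
    rw [← integral_beamOp_mul hc hg (hg.of_le (by norm_num)) hg2a hg2b hga hgb]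
    exact integral_congr_Ioo_of_le hab fun x hx => by rw [hLg x hx]
  have hcross := two_mul_energyForm_le_add hab hε hlam hκc hc (hg.of_le (by norm_num))
    (hw.of_le (by norm_num))
  have hmono := energyForm_self_le_of_coeff_le (κ := κ) (lam := lam) (ε := ε) hab hcc' hc hc'
    (hw.of_le (by norm_num))
  linarith

end EnergyForm

theorem Bop_eq_beamOp_div (κ lam ε : ℝ) (ρx v : ℝ → ℝ) (x : ℝ) :
    Bop κ lam ε ρx v x
      = beamOp κ lam ε (fun y => ρx y ^ 2) (fun y => v y / ρx y) x / ρx x := by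
  simp only [Bop, beamOp]
  ring

theorem hessian_upper_comparison_general
    (κ lam ε M : ℝ) (hκ : 0 < κ) (hlam : 0 ≤ lam) (hε : 0 < ε)
    (ρ : ℝ → ℝ) (hρx : Continuous (deriv ρ))
    (hbnd : ∀ x ∈ Icc (0:ℝ) 1, deriv ρ x ≠ 0 ∧ |deriv ρ x| ≤ M)
    (θ : ℝ → ℝ)
    (u : ℝ → ℝ) (hu : ContDiff ℝ 4 (fun x => u x / deriv ρ x))
    (hu0 : u 0 = 0) (hu1 : u 1 = 0)
    (hu''0 : iteratedDeriv 2 (fun x => u x / deriv ρ x) 0 = 0)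
    (hu''1 : iteratedDeriv 2 (fun x => u x / deriv ρ x) 1 = 0)
    (hBu : ∀ x ∈ Ioo (0:ℝ) 1, Bop κ lam ε (deriv ρ) u x = θ x)
    (wM : ℝ → ℝ) (hwM : ContDiff ℝ 4 wM)
    (hwMeq : ∀ x ∈ Ioo (0:ℝ) 1,
      ε * iteratedDeriv 4 wM x - lam * iteratedDeriv 2 wM x + (κ + M ^ 2) * wM x
        = deriv ρ x * θ x)
    (hwM0 : wM 0 = 0) (hwM1 : wM 1 = 0)
    (hwM''0 : iteratedDeriv 2 wM 0 = 0) (hwM''1 : iteratedDeriv 2 wM 1 = 0) :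
    (∫ x in (0:ℝ)..1, (θ x * deriv ρ x) * wM x) ≤ (∫ x in (0:ℝ)..1, θ x * u x) ∧
    ((∫ x in (0:ℝ)..1, (θ x) ^ 2) - (∫ x in (0:ℝ)..1, θ x * u x))
      ≤ ((∫ x in (0:ℝ)..1, (θ x) ^ 2) - ∫ x in (0:ℝ)..1, (θ x * deriv ρ x) * wM x) := by
  have hρx0 : ∀ x ∈ Ioo (0:ℝ) 1, deriv ρ x ≠ 0 :=
    fun x hx => (hbnd x (Ioo_subset_Icc_self hx)).1
  have hLg : ∀ x ∈ Ioo (0:ℝ) 1, beamOp κ lam ε (fun y => deriv ρ y ^ 2)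
      (fun y => u y / deriv ρ y) x = deriv ρ x * θ x := fun x hx => by
    rw [← hBu x hx, Bop_eq_beamOp_div, mul_div_cancel₀ _ (hρx0 x hx)]
  have hcomp := integral_mul_le_of_beamOp_eq zero_le_one hε.le hlam
    (fun x _ => add_nonneg hκ.le (sq_nonneg _))
    (fun x hx => sq_le_sq' (abs_le.mp (hbnd x hx).2).1 (abs_le.mp (hbnd x hx).2).2)
    (hρx.pow 2) continuous_const hu (by simp [hu0]) (by simp [hu1]) hu''0 hu''1
    hwM hwM0 hwM1 hwM''0 hwM''1 hLg hwMeq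
  have hθw : ∫ x in (0:ℝ)..1, θ x * deriv ρ x * wM x
      = ∫ x in (0:ℝ)..1, deriv ρ x * θ x * wM x :=
    integral_congr fun x _ => by ring
  have hθu : ∫ x in (0:ℝ)..1, θ x * u x
      = ∫ x in (0:ℝ)..1, deriv ρ x * θ x * (u x / deriv ρ x) :=
    integral_congr_Ioo_of_le zero_le_one fun x hx => by field_simp [hρx0 x hx]
  rw [hθw, hθu]
  exact ⟨hcomp, by linarith⟩

/-- The upper comparison `I − B⁻¹ ⪯ I − M_{ρ_x} L_M⁻¹ M_{ρ_x}`: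
if `Bu = θ` and `w_M` solves the constant-coefficient problem
`ε w_M'''' − λ w_M'' + (κ+M²) w_M = ρ_x θ` with `w_M = w_M'' = 0` at `x ∈ {0,1}`, then
`∫₀¹ θ u ≥ ∫₀¹ (θ ρ_x) w_M`; equivalently `∫θ² − ∫θu ≤ ∫θ² − ∫(θρ_x)w_M`. -/
theorem hessian_upper_comparison
    (κ lam ε M : ℝ) (hκ : 0 < κ) (hlam : 0 ≤ lam) (hε : 0 < ε) (hM : 0 < M)
    (ρ : ℝ → ℝ) (hρ : Differentiable ℝ ρ) (hρx : Continuous (deriv ρ))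
    (hbnd : ∀ x ∈ Icc (0:ℝ) 1, deriv ρ x ≠ 0 ∧ |deriv ρ x| ≤ M)
    (θ : ℝ → ℝ) (hθ : MemLp θ 2 (volume.restrict (Ioo (0:ℝ) 1)))
    (u : ℝ → ℝ) (hu : ContDiff ℝ 4 (fun x => u x / deriv ρ x))
    (hu0 : u 0 = 0) (hu1 : u 1 = 0)
    (hu''0 : iteratedDeriv 2 (fun x => u x / deriv ρ x) 0 = 0)
    (hu''1 : iteratedDeriv 2 (fun x => u x / deriv ρ x) 1 = 0)
    (hBu : ∀ x ∈ Ioo (0:ℝ) 1, Bop κ lam ε (deriv ρ) u x = θ x)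
    (wM : ℝ → ℝ) (hwM : ContDiff ℝ 4 wM)
    (hwMeq : ∀ x ∈ Ioo (0:ℝ) 1,
      ε * iteratedDeriv 4 wM x - lam * iteratedDeriv 2 wM x + (κ + M ^ 2) * wM x
        = deriv ρ x * θ x)
    (hwM0 : wM 0 = 0) (hwM1 : wM 1 = 0)
    (hwM''0 : iteratedDeriv 2 wM 0 = 0) (hwM''1 : iteratedDeriv 2 wM 1 = 0) :
    (∫ x in (0:ℝ)..1, (θ x * deriv ρ x) * wM x) ≤ (∫ x in (0:ℝ)..1, θ x * u x) ∧
    ((∫ x in (0:ℝ)..1, (θ x) ^ 2) - (∫ x in (0:ℝ)..1, θ x * u x))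
      ≤ ((∫ x in (0:ℝ)..1, (θ x) ^ 2) - ∫ x in (0:ℝ)..1, (θ x * deriv ρ x) * wM x) :=
  hessian_upper_comparison_general κ lam ε M hκ hlam hε ρ hρx hbnd θ u hu hu0 hu1 hu''0 hu''1 hBu wM
    hwM hwMeq hwM0 hwM1 hwM''0 hwM''1
end
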